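/- arXiv:0901.4168 — 3 statements merged into one kernel-verified Lean document; each statement's English description precedes it below -/
import Mathlib

section
/- For all m, n ∈ ℤ \ {0}, one has S_m ∩ S_n = S_{gcd(m,n)}. In particular, if gcd(m, n) = 1 then S_m ∩ S_n = ∅. -/
/-!
The points of `E(K)` whose `x`-coordinate has a pole at `q`, together with `0`, form a subgroup
`E₁` (the kernel of reduction at `q`), so `{n | n • P ∈ E₁}` is a subgroup `dℤ` of `ℤ`, and
`gcd m n ∈ dℤ ↔ m ∈ dℤ ∧ n ∈ dℤ`. Closure of `E₁` under addition: if a line meets the curve at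
`x₁, x₂, x₃`, Vieta's formulas give
`(a - x₁x₂ - x₃(x₁ + x₂))² = 4(x₁ + x₂ + x₃)(b + x₁x₂x₃)`. If `x₁, x₂` have poles of orders
`e₁, e₂` and `x₃` has none, the left side has a pole of order `2(e₁ + e₂)` and the right side one
of order at most `max e₁ e₂ + e₁ + e₂`, which is smaller.
-/

open IsDedekindDomain IsDedekindDomain.HeightOneSpectrum NumberField WeierstrassCurve Filter

open scoped Classical in
/-- The normalized additive valuation of `K` at the prime `q` (with `ordAt q 0 = 0`). -/
noncomputable def ordAt {K : Type*} [Field K] [NumberField K]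
    (q : HeightOneSpectrum (𝓞 K)) (z : K) : ℤ :=
  if hz : z = 0 then 0
  else -Multiplicative.toAdd (WithZero.unzero ((q.valuation K).ne_zero_iff.mpr hz))

namespace Valuation

variable {K Γ₀ : Type*} [Field K] [LinearOrderedCommGroupWithZero Γ₀] (v : Valuation K Γ₀)

lemma map_four_le_one : v 4 ≤ 1 := by
  have h₂ : v 2 ≤ 1 := by
    rw [← one_add_one_eq_two]
    exact (v.map_add 1 1).trans (by simp)
  rw [show (4 : K) = 2 * 2 by norm_num, map_mul]
  exact mul_le_one' h₂ h₂

lemma one_lt_of_sq_eq_four_mul {a b x₁ x₂ x₃ : K} (ha : v a ≤ 1) (hb : v b ≤ 1)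
    (h₁ : 1 < v x₁) (h₂ : 1 < v x₂)
    (h : (a - x₁ * x₂ - x₃ * (x₁ + x₂)) ^ 2 = 4 * (x₁ + x₂ + x₃) * (b + x₁ * x₂ * x₃)) :
    1 < v x₃ := by
  by_contra! h₃
  set M := max (v x₁) (v x₂)
  have hMp : M < v (x₁ * x₂) := by
    rw [map_mul]
    exact max_lt (lt_mul_of_one_lt_right (zero_lt_one.trans h₁) h₂)
      (lt_mul_of_one_lt_left (zero_lt_one.trans h₂) h₁)
  have h1M : 1 < M := h₁.trans_le (le_max_left _ _)
  have hsum : v (x₁ + x₂) ≤ M := v.map_add x₁ x₂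
  have hlhs : v (a - x₁ * x₂ - x₃ * (x₁ + x₂)) = v (x₁ * x₂) := by
    rw [sub_right_comm]
    refine v.map_sub_eq_of_lt_right (v.map_sub_lt (ha.trans_lt (h1M.trans hMp)) ?_)
    rw [map_mul]
    exact (mul_le_of_le_one_left' h₃ |>.trans hsum).trans_lt hMp
  have hrhs : v (4 * (x₁ + x₂ + x₃) * (b + x₁ * x₂ * x₃)) ≤ M * v (x₁ * x₂) := by
    rw [map_mul, map_mul]
    refine mul_le_mul' (mul_le_of_le_one_left' v.map_four_le_one |>.trans ?_) ?_
    · exact v.map_add_le hsum (h₃.trans h1M.le)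
    · refine v.map_add_le (hb.trans (h1M.trans hMp).le) ?_
      rw [map_mul v (x₁ * x₂)]
      exact mul_le_of_le_one_right' h₃
  rw [← h, map_pow, hlhs, sq] at hrhs
  exact (mul_lt_mul_of_pos_right hMp (zero_lt_one.trans (h1M.trans hMp))).not_ge hrhs

end Valuation

namespace WeierstrassCurve.Affine

open Polynomial in
/-- Vieta's formulas `x₁ + x₂ + x₃ = ℓ²`, `x₁x₂ + x₁x₃ + x₂x₃ = a₄ - 2ℓν`, `x₁x₂x₃ = ν² - a₆`
for the line `Y = ℓX + ν`, with `ℓ` and `ν` eliminated. -/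
lemma addX_relation {F : Type*} [Field F] {W : Affine F} [W.IsShortNF] {x₁ x₂ x₃ y₁ ℓ : F}
    (h : W.addPolynomial x₁ y₁ ℓ = -((X - C x₁) * (X - C x₂) * (X - C x₃))) :
    (W.a₄ - x₁ * x₂ - x₃ * (x₁ + x₂)) ^ 2 = 4 * (x₁ + x₂ + x₃) * (W.a₆ + x₁ * x₂ * x₃) := by
  rw [addPolynomial_eq, neg_inj, Cubic.prod_X_sub_C_eq, Cubic.toPoly_injective] at h
  obtain ⟨-, h₂, h₁, h₀⟩ := Cubic.ext_iff.mp h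
  simp only [IsShortNF.a₁, IsShortNF.a₂, IsShortNF.a₃] at h₀ h₁ h₂
  linear_combination (W.a₄ - x₁ * x₂ - x₃ * (x₁ + x₂) + 2 * ℓ * (y₁ - x₁ * ℓ)) * h₁
    - 4 * ℓ ^ 2 * h₀ - 4 * (W.a₆ + x₁ * x₂ * x₃) * h₂

variable {K Γ₀ : Type*} [Field K] [DecidableEq K] [LinearOrderedCommGroupWithZero Γ₀]
  (v : Valuation K Γ₀) (W : Affine K) [W.IsShortNF]

def reductionKernel (ha : v W.a₄ ≤ 1) (hb : v W.a₆ ≤ 1) : AddSubgroup W.Point where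
  carrier := {P | ∀ ⦃x y : K⦄ (h : W.Nonsingular x y), P = .some x y h → 1 < v x}
  zero_mem' _ _ h h0 := (Point.some_ne_zero h h0.symm).elim
  neg_mem' {P} hP x y h hneg := by
    rw [neg_eq_iff_eq_neg, Point.neg_some] at hneg
    exact hP _ hneg
  add_mem' := by
    rintro (_ | ⟨x₁, y₁, h₁⟩) (_ | ⟨x₂, y₂, h₂⟩) hP hQ x y h hPQ
    · exact hQ h hPQ
    · exact hQ h hPQ
    · exact hP h hPQ
    by_cases hxy : x₁ = x₂ ∧ y₁ = W.negY x₂ y₂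
    · rw [Point.add_of_Y_eq hxy.1 hxy.2] at hPQ
      exact (Point.some_ne_zero h hPQ.symm).elim
    rw [Point.add_some hxy, Point.some.injEq] at hPQ
    rw [← hPQ.1]
    exact v.one_lt_of_sq_eq_four_mul ha hb (hP h₁ rfl) (hQ h₂ rfl)
      (addX_relation (addPolynomial_slope h₁.1 h₂.1 hxy))

variable {v W}

lemma some_mem_reductionKernel {ha : v W.a₄ ≤ 1} {hb : v W.a₆ ≤ 1} {x y : K}
    (h : W.Nonsingular x y) : Point.some x y h ∈ W.reductionKernel v ha hb ↔ 1 < v x :=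
  ⟨fun hP => hP h rfl, fun hx _ _ _ e => by rw [Point.some.injEq] at e; exact e.1 ▸ hx⟩

end WeierstrassCurve.Affine

lemma AddSubgroup.gcd_mem_iff (H : AddSubgroup ℤ) {m n : ℤ} :
    (m.gcd n : ℤ) ∈ H ↔ m ∈ H ∧ n ∈ H := by
  obtain ⟨d, rfl⟩ := Int.subgroup_cyclic H
  simp only [← AddSubgroup.zmultiples_eq_closure, Int.mem_zmultiples_iff]
  exact Int.dvd_coe_gcd_iff

lemma ordAt_neg_iff {K : Type*} [Field K] [NumberField K] (q : HeightOneSpectrum (𝓞 K)) (z : K) :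
    ordAt q z < 0 ↔ 1 < q.valuation K z := by
  rcases eq_or_ne z 0 with rfl | hz
  · simp [ordAt]
  · have := WithZero.coe_unzero ((q.valuation K).ne_zero_iff.mpr hz)
    rw [ordAt, dif_neg hz, neg_lt_zero, ← toAdd_one, Multiplicative.toAdd_lt,
      ← WithZero.coe_lt_coe, this, WithZero.coe_one]

open scoped Classical in
theorem stmt_5
    (K : Type) [Field K] [NumberField K]
    (a b : 𝓞 K)
    (W : WeierstrassCurve.Affine K)
    (hW : W = { a₁ := 0, a₂ := 0, a₃ := 0, a₄ := algebraMap (𝓞 K) K a,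
                a₆ := algebraMap (𝓞 K) K b })
    (P : W.Point) (hP : ¬ IsOfFinAddOrder P)
    (x y : ℤ → K)
    (hxy : ∀ n : ℤ, n ≠ 0 → ∃ h : W.Nonsingular (x n) (y n),
      n • P = WeierstrassCurve.Affine.Point.some _ _ h)
    (Sbad : Set (HeightOneSpectrum (𝓞 K)))
    (hSbadFin : Sbad.Finite)
    (hSbadRam : ∀ q : HeightOneSpectrum (𝓞 K),
      (∃ p : ℕ, p.Prime ∧ q.asIdeal ^ 2 ∣ Ideal.span {(p : 𝓞 K)}) → q ∈ Sbad)
    (hSbad2 : ∀ q : HeightOneSpectrum (𝓞 K), (2 : 𝓞 K) ∈ q.asIdeal → q ∈ Sbad)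
    (hSbadSing : ∀ q : HeightOneSpectrum (𝓞 K),
      (-16 * (4 * a ^ 3 + 27 * b ^ 2) : 𝓞 K) ∈ q.asIdeal → q ∈ Sbad)
    (hSbadP : ∀ q : HeightOneSpectrum (𝓞 K),
      (ordAt q (x 1) < 0 ∨ ordAt q (y 1) < 0) → q ∈ Sbad)
    (S : ℤ → Set (HeightOneSpectrum (𝓞 K)))
    (hS : ∀ n : ℤ, n ≠ 0 →
      S n = {q : HeightOneSpectrum (𝓞 K) | q ∉ Sbad ∧ ordAt q (x n) < 0})
    :
    ∀ m n : ℤ, m ≠ 0 → n ≠ 0 →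
      S m ∩ S n = S (Int.gcd m n : ℤ) ∧
        (Int.gcd m n = 1 → S m ∩ S n = ∅) := by
  have : W.IsShortNF := by subst hW; exact ⟨rfl, rfl, rfl⟩
  have ha (q : HeightOneSpectrum (𝓞 K)) : q.valuation K W.a₄ ≤ 1 := by
    subst hW; exact q.valuation_le_one a
  have hb (q : HeightOneSpectrum (𝓞 K)) : q.valuation K W.a₆ ≤ 1 := by
    subst hW; exact q.valuation_le_one b
  let H (q : HeightOneSpectrum (𝓞 K)) : AddSubgroup ℤ :=
    (W.reductionKernel (q.valuation K) (ha q) (hb q)).comap (zmultiplesHom _ P)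
  have mem_H (q) {k : ℤ} (hk : k ≠ 0) : k ∈ H q ↔ ordAt q (x k) < 0 := by
    obtain ⟨h, e⟩ := hxy k hk
    simp only [H, AddSubgroup.mem_comap, zmultiplesHom_apply, e,
      Affine.some_mem_reductionKernel, ordAt_neg_iff]
  intro m n hm hn
  have hgcd : (Int.gcd m n : ℤ) ≠ 0 := Int.natCast_ne_zero.mpr (Int.gcd_ne_zero_left hm)
  have inter : S m ∩ S n = S (Int.gcd m n) := by
    ext q
    simp only [hS _ hm, hS _ hn, hS _ hgcd, Set.mem_inter_iff, Set.mem_ofPred_eq,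
      ← mem_H q hm, ← mem_H q hn, ← mem_H q hgcd, AddSubgroup.gcd_mem_iff]
    tauto
  refine ⟨inter, fun h1 => ?_⟩
  rw [inter, h1, Nat.cast_one, hS 1 one_ne_zero]
  exact Set.eq_empty_of_forall_notMem fun q hq => hq.1 (hSbadP q (Or.inl hq.2))
end

section
/- For all coprime integers m, k ≥ 1, the ideal c_m·c_k divides the ideal c_{mk} in O_K. -/
/-!
Fix a prime `q` at which `a` and `b` are integral. For `r > 1` the points `P` of `E` with
`|x(P)|_q ≥ r`, together with `O`, form a subgroup: in the coordinates `t = x/y`, `u = 1/y` near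
`O` the curve reads `u = t³ + a t u² + b u³`, these points form a disc `|t| ≤ ρ`, and a line
through two points of the disc has slope `≤ ρ²` and intercept `≤ ρ³`, which forces its third
intersection with the curve into the disc as well. Applied to `[m]P` this gives
`ord_q(x_{mk}) ≤ ord_q(x_m)` whenever `x_m` has a pole at `q`.

For `q ∈ V` the indices `n` with `q ∈ S_n` are the nonzero multiples of a prime power, so for
coprime `m, k` the sets `V ∩ S_m` and `V ∩ S_k` are disjoint, both lie in `V ∩ S_{mk}`, and the
exponents in `c_m`, `c_k` are at most those in `c_{mk}`.
-/

open IsDedekindDomain IsDedekindDomain.HeightOneSpectrum NumberField WeierstrassCurve Filter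

section Chart

variable {K Γ₀ : Type*} [Field K] [LinearOrderedCommGroupWithZero Γ₀] (v : Valuation K Γ₀)
  {a b x y : K} {ρ : Γ₀}

theorem valuation_sq_y_eq_cube_x (ha : v a ≤ 1) (hb : v b ≤ 1)
    (h : y ^ 2 = x ^ 3 + a * x + b) (hx : 1 < v x) : v y ^ 2 = v x ^ 3 := by
  have hlow : v (a * x + b) < v (x ^ 3) := by
    rw [map_pow]
    refine lt_of_le_of_lt (v.map_add_le ?_ (hb.trans hx.le)) (lt_self_pow₀ hx (by norm_num))
    rw [map_mul]; exact mul_le_of_le_one_left zero_le ha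
  rw [← map_pow, h, add_assoc, v.map_add_eq_of_lt_left hlow, map_pow]

theorem one_lt_valuation_x_of_one_lt_valuation_y (ha : v a ≤ 1) (hb : v b ≤ 1)
    (h : y ^ 2 = x ^ 3 + a * x + b) (hy : 1 < v y) : 1 < v x := by
  by_contra! hx
  have : v (y ^ 2) ≤ 1 := by
    rw [h]; refine v.map_add_le (v.map_add_le ?_ ?_) hb
    · rw [map_pow]; exact pow_le_one₀ zero_le hx
    · rw [map_mul]; exact mul_le_one' ha hx
  rw [map_pow] at this
  exact (one_lt_pow₀ hy two_ne_zero).not_ge this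

theorem y_ne_zero_of_one_lt_valuation_x (ha : v a ≤ 1) (hb : v b ≤ 1)
    (h : y ^ 2 = x ^ 3 + a * x + b) (hx : 1 < v x) : y ≠ 0 := by
  rintro rfl
  have := valuation_sq_y_eq_cube_x v ha hb h hx
  rw [map_zero, zero_pow two_ne_zero] at this
  exact pow_ne_zero 3 (zero_lt_one.trans hx).ne' this.symm

theorem chart_equation (hy : y ≠ 0) (h : y ^ 2 = x ^ 3 + a * x + b) :
    y⁻¹ = (x / y) ^ 3 + a * (x / y) * y⁻¹ ^ 2 + b * y⁻¹ ^ 3 := by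
  field_simp; linear_combination h

theorem valuation_chart_of_one_lt (ha : v a ≤ 1) (hb : v b ≤ 1)
    (h : y ^ 2 = x ^ 3 + a * x + b) (hx : 1 < v x) :
    v (x / y) ^ 2 * v x = 1 ∧ v y⁻¹ = v (x / y) ^ 3 := by
  have hy := valuation_sq_y_eq_cube_x v ha hb h hx
  have hvy : v y ≠ 0 := v.ne_zero_iff.mpr (y_ne_zero_of_one_lt_valuation_x v ha hb h hx)
  rw [map_div₀, map_inv₀, div_pow, div_pow, div_mul_eq_mul_div, ← pow_succ, ← hy,
    div_self (pow_ne_zero 2 hvy), pow_succ (v y) 2, div_mul_cancel_left₀ (pow_ne_zero 2 hvy)]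
  exact ⟨rfl, rfl⟩

theorem valuation_sq_add_mul_add_sq_le {s : Γ₀} (hx : v x ≤ s) (hy : v y ≤ s) :
    v (x ^ 2 + x * y + y ^ 2) ≤ s ^ 2 := by
  refine v.map_add_le (v.map_add_le ?_ ?_) ?_ <;> simp only [map_mul, sq] <;> gcongr

/-- In the chart the line `L x + c = y` reads `u = -(L / c) t + c⁻¹`; this identity says that its
slope is `N / (1 - Z)`, by dividing the difference of the two chart equations by `t₁ - t₂`, or by
the tangency condition when the points coincide. -/
theorem chart_secant_relation {t₁ u₁ t₂ u₂ L c : K}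
    (hC₁ : u₁ = t₁ ^ 3 + a * t₁ * u₁ ^ 2 + b * u₁ ^ 3)
    (hC₂ : u₂ = t₂ ^ 3 + a * t₂ * u₂ ^ 2 + b * u₂ ^ 3) (hu₁ : u₁ ≠ 0)
    (hl₁ : L * t₁ + c * u₁ = 1) (hl₂ : L * t₂ + c * u₂ = 1)
    (htan : t₁ = t₂ → u₁ = u₂ → 2 * L * u₁ = 3 * t₁ ^ 2 + a * u₁ ^ 2)
    (hZ : 1 - (a * t₂ * (u₁ + u₂) + b * (u₁ ^ 2 + u₁ * u₂ + u₂ ^ 2)) ≠ 0) :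
    L * (1 - (a * t₂ * (u₁ + u₂) + b * (u₁ ^ 2 + u₁ * u₂ + u₂ ^ 2))) +
      c * (t₁ ^ 2 + t₁ * t₂ + t₂ ^ 2 + a * u₁ ^ 2) = 0 := by
  set Z := a * t₂ * (u₁ + u₂) + b * (u₁ ^ 2 + u₁ * u₂ + u₂ ^ 2)
  set N := t₁ ^ 2 + t₁ * t₂ + t₂ ^ 2 + a * u₁ ^ 2
  have hdiff : (u₁ - u₂) * (1 - Z) = (t₁ - t₂) * N := by linear_combination hC₁ - hC₂
  by_cases ht : t₁ = t₂
  · have hu : u₁ = u₂ := by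
      rw [ht, sub_self, zero_mul] at hdiff
      exact sub_eq_zero.mp ((mul_eq_zero.mp hdiff).resolve_right hZ)
    subst ht hu
    refine (mul_eq_zero.mp ?_).resolve_left hu₁
    linear_combination (-(c * u₁) - L * t₁) * htan rfl rfl + 2 * L * u₁ * hl₁ + 3 * L * hC₁
  · refine (mul_eq_zero.mp ?_).resolve_left (sub_ne_zero.mpr ht)
    linear_combination (1 - Z) * (hl₁ - hl₂) - c * hdiff

theorem valuation_chart_slope_le (ha : v a ≤ 1) (hb : v b ≤ 1) (hρ : ρ < 1)
    {t₁ u₁ t₂ u₂ L c : K}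
    (hC₁ : u₁ = t₁ ^ 3 + a * t₁ * u₁ ^ 2 + b * u₁ ^ 3)
    (hC₂ : u₂ = t₂ ^ 3 + a * t₂ * u₂ ^ 2 + b * u₂ ^ 3)
    (ht₁ : v t₁ ≤ ρ) (ht₂ : v t₂ ≤ ρ) (hu₁ : v u₁ ≤ ρ ^ 3) (hu₂ : v u₂ ≤ ρ ^ 3) (hu₁0 : u₁ ≠ 0)
    (hl₁ : L * t₁ + c * u₁ = 1) (hl₂ : L * t₂ + c * u₂ = 1)
    (htan : t₁ = t₂ → u₁ = u₂ → 2 * L * u₁ = 3 * t₁ ^ 2 + a * u₁ ^ 2) :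
    c ≠ 0 ∧ v (L / c) ≤ ρ ^ 2 ∧ v c⁻¹ ≤ ρ ^ 3 := by
  have hρ6 : (ρ ^ 3) ^ 2 ≤ ρ ^ 2 := by
    rw [← pow_mul]; exact pow_le_pow_right_of_le_one' hρ.le (by norm_num)
  have hρ3 : ρ ^ 3 ≤ 1 := pow_le_one₀ zero_le hρ.le
  have hZ : v (1 - (a * t₂ * (u₁ + u₂) + b * (u₁ ^ 2 + u₁ * u₂ + u₂ ^ 2))) = 1 := by
    refine v.map_one_sub_of_lt (lt_of_le_of_lt (v.map_add_le (g := ρ) ?_ ?_) hρ)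
    · have : v (u₁ + u₂) ≤ 1 := v.map_add_le (hu₁.trans hρ3) (hu₂.trans hρ3)
      calc v (a * t₂ * (u₁ + u₂)) ≤ 1 * ρ * 1 := by simp only [map_mul]; gcongr
        _ = ρ := by rw [one_mul, mul_one]
    · calc v (b * (u₁ ^ 2 + u₁ * u₂ + u₂ ^ 2)) ≤ 1 * (ρ ^ 3) ^ 2 :=
            by rw [map_mul]; gcongr; exact valuation_sq_add_mul_add_sq_le v hu₁ hu₂
        _ ≤ ρ := by rw [one_mul]; exact hρ6.trans (pow_le_of_le_one zero_le hρ.le two_ne_zero)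
  have hN : v (t₁ ^ 2 + t₁ * t₂ + t₂ ^ 2 + a * u₁ ^ 2) ≤ ρ ^ 2 := by
    refine v.map_add_le (valuation_sq_add_mul_add_sq_le v ht₁ ht₂) ?_
    calc v (a * u₁ ^ 2) ≤ 1 * (ρ ^ 3) ^ 2 := by simp only [map_mul, map_pow]; gcongr
      _ ≤ ρ ^ 2 := by rwa [one_mul]
  have hZ0 : 1 - (a * t₂ * (u₁ + u₂) + b * (u₁ ^ 2 + u₁ * u₂ + u₂ ^ 2)) ≠ 0 :=
    v.ne_zero_iff.mp (hZ ▸ one_ne_zero)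
  have hrel := chart_secant_relation hC₁ hC₂ hu₁0 hl₁ hl₂ htan hZ0
  have hc : c ≠ 0 := by
    rintro rfl
    have hL : L = 0 := by simpa [hZ0] using hrel
    simp [hL] at hl₁
  have hμ : v (L / c) ≤ ρ ^ 2 := by
    rw [show L / c = -(t₁ ^ 2 + t₁ * t₂ + t₂ ^ 2 + a * u₁ ^ 2) /
        (1 - (a * t₂ * (u₁ + u₂) + b * (u₁ ^ 2 + u₁ * u₂ + u₂ ^ 2))) by
      rw [div_eq_div_iff hc hZ0]; linear_combination hrel, map_div₀, v.map_neg, hZ, div_one]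
    exact hN
  refine ⟨hc, hμ, ?_⟩
  rw [show c⁻¹ = u₁ + L / c * t₁ by field_simp; linear_combination -hl₁]
  refine v.map_add_le hu₁ ?_
  rw [map_mul, pow_succ]; gcongr

theorem valuation_le_of_chart_line (ha : v a ≤ 1) (hb : v b ≤ 1) (hρ : ρ < 1) {μ γ t u : K}
    (hμ : v μ ≤ ρ ^ 2) (hγ : v γ ≤ ρ ^ 3) (hl : u = μ * t + γ)
    (hC : u = t ^ 3 + a * t * u ^ 2 + b * u ^ 3) : v t ≤ ρ ∧ v u ≤ ρ ^ 3 := by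
  have ht : v t ≤ ρ := by
    -- if `|t| > ρ`, each term of `t³ = u - a t u² - b u³` on the right is smaller than `|t|³`
    by_contra! hτ
    set τ := v t
    have hτ0 : 0 < τ := zero_le.trans_lt hτ
    have hρτ : ρ ^ 2 < τ ^ 2 := pow_lt_pow_left₀ hτ zero_le two_ne_zero
    have hu : v u ≤ ρ ^ 2 * τ := by
      rw [hl]
      refine v.map_add_le (by rw [map_mul]; gcongr) (hγ.trans ?_)
      rw [pow_succ]; gcongr
    have hu' : v u < τ := hu.trans_lt
      (by simpa using mul_lt_mul_of_pos_right (pow_lt_one₀ zero_le hρ two_ne_zero) hτ0)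
    have h1 : v u < τ ^ 3 := hu.trans_lt
      (by rw [pow_succ' τ 2, mul_comm τ]; exact mul_lt_mul_of_pos_right hρτ hτ0)
    have h2 : v (a * t * u ^ 2) < τ ^ 3 := by
      rw [map_mul, map_mul, map_pow, pow_succ' τ 2]
      calc v a * τ * v u ^ 2 ≤ 1 * τ * v u ^ 2 := by gcongr
        _ < τ * τ ^ 2 := by
          rw [one_mul]
          exact mul_lt_mul_of_pos_left (pow_lt_pow_left₀ hu' zero_le two_ne_zero) hτ0
    have h3 : v (b * u ^ 3) < τ ^ 3 := by
      rw [map_mul, map_pow]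
      calc v b * v u ^ 3 ≤ 1 * v u ^ 3 := by gcongr
        _ < τ ^ 3 := by rw [one_mul]; exact pow_lt_pow_left₀ hu' zero_le three_ne_zero
    have : v (t ^ 3) < τ ^ 3 := by
      rw [show t ^ 3 = u - a * t * u ^ 2 - b * u ^ 3 by linear_combination -hC]
      exact (v.map_sub _ _).trans_lt (max_lt ((v.map_sub _ _).trans_lt (max_lt h1 h2)) h3)
    exact this.ne (map_pow v t 3)
  refine ⟨ht, ?_⟩
  rw [hl]
  refine v.map_add_le ?_ hγ
  rw [map_mul, pow_succ]; gcongr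

theorem le_valuation_x_of_valuation_chart_le (ha : v a ≤ 1) (hb : v b ≤ 1)
    (h : y ^ 2 = x ^ 3 + a * x + b) (hy : y ≠ 0) (hρ : ρ < 1) {r : Γ₀} (hρr : ρ ^ 2 * r ≤ 1)
    (ht : v (x / y) ≤ ρ) (hu : v y⁻¹ ≤ ρ ^ 3) : r ≤ v x := by
  have hx : 1 < v x := by
    refine one_lt_valuation_x_of_one_lt_valuation_y v ha hb h ?_
    have := hu.trans_lt (pow_lt_one₀ zero_le hρ three_ne_zero)
    rwa [map_inv₀, inv_lt_one₀ (v.pos_iff.mpr hy)] at this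
  obtain ⟨hv, -⟩ := valuation_chart_of_one_lt v ha hb h hx
  by_contra! hlt
  have ht0 : 0 < v (x / y) ^ 2 := zero_lt_iff.mpr (left_ne_zero_of_mul_eq_one hv)
  exact (calc 1 = v (x / y) ^ 2 * v x := hv.symm
    _ < v (x / y) ^ 2 * r := mul_lt_mul_of_pos_left hlt ht0
    _ ≤ ρ ^ 2 * r := by gcongr
    _ ≤ 1 := hρr).false

theorem le_valuation_x_of_mem_line (ha : v a ≤ 1) (hb : v b ≤ 1) {r : Γ₀} (hr : 1 < r)
    {x₁ y₁ x₂ y₂ x₃ y₃ L c : K}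
    (h₁ : y₁ ^ 2 = x₁ ^ 3 + a * x₁ + b) (h₂ : y₂ ^ 2 = x₂ ^ 3 + a * x₂ + b)
    (h₃ : y₃ ^ 2 = x₃ ^ 3 + a * x₃ + b)
    (hl₁ : y₁ = L * x₁ + c) (hl₂ : y₂ = L * x₂ + c) (hl₃ : y₃ = L * x₃ + c)
    (htan : x₁ = x₂ → 2 * y₁ * L = 3 * x₁ ^ 2 + a)
    (hx₁ : r ≤ v x₁) (hx₂ : r ≤ v x₂) : r ≤ v x₃ := by
  have hy₁ := y_ne_zero_of_one_lt_valuation_x v ha hb h₁ (hr.trans_le hx₁)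
  have hy₂ := y_ne_zero_of_one_lt_valuation_x v ha hb h₂ (hr.trans_le hx₂)
  obtain ⟨hv₁, hu₁⟩ := valuation_chart_of_one_lt v ha hb h₁ (hr.trans_le hx₁)
  obtain ⟨hv₂, hu₂⟩ := valuation_chart_of_one_lt v ha hb h₂ (hr.trans_le hx₂)
  set ρ := max (v (x₁ / y₁)) (v (x₂ / y₂))
  have hρr : ρ ^ 2 * r ≤ 1 := by
    rcases max_choice (v (x₁ / y₁)) (v (x₂ / y₂)) with h | h <;> rw [show ρ = _ from h]
    · rw [← hv₁]; gcongr
    · rw [← hv₂]; gcongr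
  have hρ : ρ < 1 := by
    by_contra! h1
    exact (hr.trans_le ((le_mul_of_one_le_left zero_le (one_le_pow₀ h1)).trans hρr)).false
  have hline : ∀ {x y : K}, y ≠ 0 → y = L * x + c → L * (x / y) + c * y⁻¹ = 1 := by
    intro x y hy hl; field_simp; linear_combination -hl
  have htan' : x₁ / y₁ = x₂ / y₂ → y₁⁻¹ = y₂⁻¹ →
      2 * L * y₁⁻¹ = 3 * (x₁ / y₁) ^ 2 + a * y₁⁻¹ ^ 2 := by
    intro ht hu
    obtain rfl : y₁ = y₂ := inv_injective hu
    have := htan (by simpa [div_left_inj' hy₁] using ht)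
    field_simp; linear_combination this
  obtain ⟨hc, hμ, hγ⟩ := valuation_chart_slope_le v ha hb hρ (chart_equation hy₁ h₁)
    (chart_equation hy₂ h₂) (le_max_left _ _) (le_max_right _ _)
    (hu₁ ▸ pow_le_pow_left₀ zero_le (le_max_left _ _) 3)
    (hu₂ ▸ pow_le_pow_left₀ zero_le (le_max_right _ _) 3) (inv_ne_zero hy₁)
    (hline hy₁ hl₁) (hline hy₂ hl₂) htan'
  have hμ' : v (-(L / c)) ≤ ρ ^ 2 := by rwa [v.map_neg]
  have hy₃ : y₃ ≠ 0 := by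
    intro hy₃
    have hx₃ : -(L / c) * x₃ = 1 := by field_simp; linear_combination hl₃ - hy₃
    refine y_ne_zero_of_one_lt_valuation_x v ha hb h₃ ?_ hy₃
    by_contra! h
    have : v (-(L / c) * x₃) ≤ ρ ^ 2 * 1 := by rw [map_mul]; gcongr
    rw [hx₃, map_one, mul_one] at this
    exact (pow_lt_one₀ zero_le hρ two_ne_zero).not_ge this
  obtain ⟨ht₃, hu₃⟩ := valuation_le_of_chart_line v ha hb hρ hμ' hγ
    (by field_simp; linear_combination -hl₃) (chart_equation hy₃ h₃)
  exact le_valuation_x_of_valuation_chart_le v ha hb h₃ hy₃ hρ hρr ht₃ hu₃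

end Chart

namespace WeierstrassCurve.Affine

variable {K Γ₀ : Type*} [Field K] [LinearOrderedCommGroupWithZero Γ₀]
  (v : Valuation K Γ₀) {W : WeierstrassCurve.Affine K} [W.IsShortNF]

theorem equation_iff_of_isShortNF {x y : K} :
    W.Equation x y ↔ y ^ 2 = x ^ 3 + W.a₄ * x + W.a₆ := by
  simp [equation_iff]

variable [DecidableEq K]

theorem le_valuation_addX (ha₄ : v W.a₄ ≤ 1) (ha₆ : v W.a₆ ≤ 1) {r : Γ₀} (hr : 1 < r)
    {x₁ y₁ x₂ y₂ : K} (h₁ : W.Equation x₁ y₁) (h₂ : W.Equation x₂ y₂)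
    (hxy : ¬(x₁ = x₂ ∧ y₁ = W.negY x₂ y₂)) (hx₁ : r ≤ v x₁) (hx₂ : r ≤ v x₂) :
    r ≤ v (W.addX x₁ x₂ (W.slope x₁ x₂ y₁ y₂)) := by
  set L := W.slope x₁ x₂ y₁ y₂
  have hl₂ : y₂ = L * x₂ + (y₁ - L * x₁) := by
    by_cases hx : x₁ = x₂
    · rw [← hx, Y_eq_of_Y_ne h₁ h₂ hx fun hy => hxy ⟨hx, hy⟩]; ring
    · have : L * (x₁ - x₂) = y₁ - y₂ := by
        rw [show L = _ from slope_of_X_ne hx, div_mul_cancel₀ _ (sub_ne_zero.mpr hx)]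
      linear_combination this
  have htan : x₁ = x₂ → 2 * y₁ * L = 3 * x₁ ^ 2 + W.a₄ := by
    intro hx
    have hy : y₁ ≠ W.negY x₁ y₁ := by
      rw [← Y_eq_of_Y_ne h₁ h₂ hx fun hy => hxy ⟨hx, hy⟩] at hxy
      exact fun hy => hxy ⟨hx, hx ▸ hy⟩
    have hD : y₁ - W.negY x₁ y₁ = 2 * y₁ := by
      simp only [negY, a₁_of_isShortNF, a₃_of_isShortNF]; ring
    rw [show L = _ from slope_of_Y_ne hx fun hy => hxy ⟨hx, hy⟩, ← hD,
      mul_div_cancel₀ _ (sub_ne_zero.mpr hy), a₁_of_isShortNF, a₂_of_isShortNF]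
    ring
  refine le_valuation_x_of_mem_line v ha₄ ha₆ hr (equation_iff_of_isShortNF.mp h₁)
    (equation_iff_of_isShortNF.mp h₂)
    (equation_iff_of_isShortNF.mp (equation_negAdd h₁ h₂ hxy)) (by ring) hl₂ ?_ htan hx₁ hx₂
  simp only [negAddY]; ring

def poleSubgroup (ha₄ : v W.a₄ ≤ 1) (ha₆ : v W.a₆ ≤ 1) {r : Γ₀} (hr : 1 < r) :
    AddSubgroup W.Point where
  carrier := {P | match P with | .zero => True | .some x _ _ => r ≤ v x}
  zero_mem' := trivial
  neg_mem' := by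
    rintro (_ | ⟨x, y, h⟩) hP
    · trivial
    · exact hP
  add_mem' := by
    rintro (_ | ⟨x₁, y₁, h₁⟩) (_ | ⟨x₂, y₂, h₂⟩) hP hQ
    · trivial
    · exact hQ
    · exact hP
    by_cases hxy : x₁ = x₂ ∧ y₁ = W.negY x₂ y₂
    · rw [Point.add_of_Y_eq hxy.1 hxy.2]; trivial
    · rw [Point.add_some hxy]
      exact le_valuation_addX v ha₄ ha₆ hr h₁.1 h₂.1 hxy hP hQ

theorem some_mem_poleSubgroup_iff {ha₄ : v W.a₄ ≤ 1} {ha₆ : v W.a₆ ≤ 1} {r : Γ₀} {hr : 1 < r}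
    {x y : K} (h : W.Nonsingular x y) : Point.some x y h ∈ poleSubgroup v ha₄ ha₆ hr ↔ r ≤ v x :=
  Iff.rfl

end WeierstrassCurve.Affine

theorem prod_pow_mul_prod_pow_dvd {ι M : Type*} [CommMonoid M] [DecidableEq ι] {s t u : Finset ι}
    (f : ι → M) {e₁ e₂ e : ι → ℕ} (hst : Disjoint s t) (hs : ∀ i ∈ s, i ∈ u ∧ e₁ i ≤ e i)
    (ht : ∀ i ∈ t, i ∈ u ∧ e₂ i ≤ e i) :
    (∏ i ∈ s, f i ^ e₁ i) * (∏ i ∈ t, f i ^ e₂ i) ∣ ∏ i ∈ u, f i ^ e i := by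
  calc (∏ i ∈ s, f i ^ e₁ i) * (∏ i ∈ t, f i ^ e₂ i)
      ∣ (∏ i ∈ s, f i ^ e i) * (∏ i ∈ t, f i ^ e i) :=
        mul_dvd_mul (Finset.prod_dvd_prod_of_dvd _ _ fun i hi => pow_dvd_pow _ (hs i hi).2)
          (Finset.prod_dvd_prod_of_dvd _ _ fun i hi => pow_dvd_pow _ (ht i hi).2)
    _ = ∏ i ∈ s ∪ t, f i ^ e i := (Finset.prod_union hst).symm
    _ ∣ ∏ i ∈ u, f i ^ e i := Finset.prod_dvd_prod_of_subset _ _ _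
        (Finset.union_subset (fun i hi => (hs i hi).1) fun i hi => (ht i hi).1)

theorem of_dvd_of_setOf_eq_dvd {p : ℤ → Prop} {d : ℤ} (hp : {n | n = 0 ∨ p n} = {n | d ∣ n})
    {m n : ℤ} (hm : p m) (hmn : m ∣ n) (hn : n ≠ 0) : p n := by
  have h := Set.ext_iff.mp hp
  exact ((h n).mpr (((h m).mp (Or.inr hm)).trans hmn)).resolve_left hn

theorem not_and_of_setOf_eq_dvd {p : ℤ → Prop} {d : ℤ} (hp : {n | n = 0 ∨ p n} = {n | d ∣ n})
    (hd : ¬IsUnit d) {m k : ℤ} (hmk : Int.gcd m k = 1) : ¬(p m ∧ p k) := by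
  rintro ⟨hm, hk⟩
  have h := Set.ext_iff.mp hp
  have hdvd := Int.dvd_coe_gcd ((h m).mp (Or.inr hm)) ((h k).mp (Or.inr hk))
  rw [hmk, Nat.cast_one] at hdvd
  exact hd (isUnit_of_dvd_one hdvd)

section NumberField

open WeierstrassCurve.Affine

variable {K : Type*} [Field K] [NumberField K] (q : HeightOneSpectrum (𝓞 K))

theorem ordAt_eq_neg_log (z : K) : ordAt q z = -WithZero.log (q.valuation K z) := by
  unfold ordAt
  split_ifs with hz
  · simp [hz]
  · rw [WithZero.toAdd_unzero_eq_log]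

theorem one_lt_valuation_of_ordAt_neg {z : K} (h : ordAt q z < 0) : 1 < q.valuation K z := by
  rw [ordAt_eq_neg_log, neg_neg_iff_pos] at h
  have hz : q.valuation K z ≠ 0 := by rintro h0; simp [h0] at h
  simpa using (WithZero.lt_log_iff_exp_lt hz).mp h

theorem ordAt_le_ordAt_of_valuation_le {z w : K} (hz : 1 < q.valuation K z)
    (hzw : q.valuation K z ≤ q.valuation K w) : ordAt q w ≤ ordAt q z := by
  have hz0 : q.valuation K z ≠ 0 := (zero_lt_one.trans hz).ne'
  have hw0 : q.valuation K w ≠ 0 := (zero_lt_one.trans (hz.trans_le hzw)).ne'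
  rw [ordAt_eq_neg_log, ordAt_eq_neg_log, neg_le_neg_iff, WithZero.log_le_log hz0 hw0]
  exact hzw

theorem ordAt_x_mul_le [DecidableEq K] {W : WeierstrassCurve.Affine K} [W.IsShortNF]
    (ha₄ : q.valuation K W.a₄ ≤ 1) (ha₆ : q.valuation K W.a₆ ≤ 1) {P : W.Point} {x y : ℤ → K}
    (hxy : ∀ n : ℤ, n ≠ 0 → ∃ h : W.Nonsingular (x n) (y n), n • P = Point.some _ _ h)
    {m k : ℤ} (hm : m ≠ 0) (hk : k ≠ 0) (hneg : ordAt q (x m) < 0) :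
    ordAt q (x (m * k)) ≤ ordAt q (x m) := by
  have hr := one_lt_valuation_of_ordAt_neg q hneg
  obtain ⟨_, hmP⟩ := hxy m hm
  obtain ⟨_, hmkP⟩ := hxy (m * k) (mul_ne_zero hm hk)
  have hmem : m • P ∈ poleSubgroup (q.valuation K) ha₄ ha₆ hr := by
    rw [hmP, some_mem_poleSubgroup_iff]
  have := (poleSubgroup (q.valuation K) ha₄ ha₆ hr).zsmul_mem hmem k
  rw [← mul_zsmul', hmkP, some_mem_poleSubgroup_iff] at this
  exact ordAt_le_ordAt_of_valuation_le q hr this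

end NumberField

open scoped Classical in
theorem stmt_10
    (K : Type) [Field K] [NumberField K]
    (a b : 𝓞 K)
    (W : WeierstrassCurve.Affine K)
    (hW : W = { a₁ := 0, a₂ := 0, a₃ := 0, a₄ := algebraMap (𝓞 K) K a,
                a₆ := algebraMap (𝓞 K) K b })
    (P : W.Point) (hP : ¬ IsOfFinAddOrder P)
    (x y : ℤ → K)
    (hxy : ∀ n : ℤ, n ≠ 0 → ∃ h : W.Nonsingular (x n) (y n),
      n • P = WeierstrassCurve.Affine.Point.some _ _ h)
    (Sbad : Set (HeightOneSpectrum (𝓞 K)))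
    (hSbadFin : Sbad.Finite)
    (hSbadRam : ∀ q : HeightOneSpectrum (𝓞 K),
      (∃ p : ℕ, p.Prime ∧ q.asIdeal ^ 2 ∣ Ideal.span {(p : 𝓞 K)}) → q ∈ Sbad)
    (hSbad2 : ∀ q : HeightOneSpectrum (𝓞 K), (2 : 𝓞 K) ∈ q.asIdeal → q ∈ Sbad)
    (hSbadSing : ∀ q : HeightOneSpectrum (𝓞 K),
      (-16 * (4 * a ^ 3 + 27 * b ^ 2) : 𝓞 K) ∈ q.asIdeal → q ∈ Sbad)
    (hSbadP : ∀ q : HeightOneSpectrum (𝓞 K),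
      (ordAt q (x 1) < 0 ∨ ordAt q (y 1) < 0) → q ∈ Sbad)
    (S : ℤ → Set (HeightOneSpectrum (𝓞 K)))
    (hS : ∀ n : ℤ, n ≠ 0 →
      S n = {q : HeightOneSpectrum (𝓞 K) | q ∉ Sbad ∧ ordAt q (x n) < 0})
    (V : Set (HeightOneSpectrum (𝓞 K)))
    (hV : V = {q : HeightOneSpectrum (𝓞 K) | q ∉ Sbad ∧ ∃ ℓ : ℕ, ℓ.Prime ∧
      ∃ j : ℕ, 1 ≤ j ∧ {n : ℤ | n = 0 ∨ q ∈ S n} = {n : ℤ | (ℓ : ℤ) ^ j ∣ n}})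
    (c : ℤ → Ideal (𝓞 K))
    (Tc : ℤ → Finset (HeightOneSpectrum (𝓞 K)))
    (hTc : ∀ n : ℤ, 1 ≤ n → (Tc n : Set (HeightOneSpectrum (𝓞 K))) = V ∩ S n)
    (hc : ∀ n : ℤ, 1 ≤ n →
      c n = ∏ q ∈ Tc n, q.asIdeal ^ (-(ordAt q (x n))).toNat)
    :
    ∀ m k : ℤ, 1 ≤ m → 1 ≤ k → Int.gcd m k = 1 →
      c m * c k ∣ c (m * k) := by
  intro m k hm hk hmk
  have : W.IsShortNF := by subst hW; exact ⟨rfl, rfl, rfl⟩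
  have hmemTc : ∀ n, 1 ≤ n → ∀ q, q ∈ Tc n ↔ q ∈ V ∧ q ∈ S n := fun n hn q => by
    rw [← Finset.mem_coe, hTc n hn]; rfl
  have hpattern : ∀ q ∈ V, ∃ d : ℤ, ¬IsUnit d ∧ {n : ℤ | n = 0 ∨ q ∈ S n} = {n | d ∣ n} := by
    rw [hV]
    rintro q ⟨-, ℓ, hℓ, j, hj, h⟩
    refine ⟨ℓ ^ j, ?_, h⟩
    rw [isUnit_pow_iff (by omega)]
    exact (Nat.prime_iff_prime_int.mp hℓ).not_isUnit
  have hgrow : ∀ n n', 1 ≤ n → 1 ≤ n' → ∀ q ∈ Tc n,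
      q ∈ Tc (n * n') ∧ (-ordAt q (x n)).toNat ≤ (-ordAt q (x (n * n'))).toNat := by
    intro n n' hn hn' q hq
    obtain ⟨hqV, hqS⟩ := (hmemTc n hn q).mp hq
    obtain ⟨d, -, hd⟩ := hpattern q hqV
    have hnn' : n * n' ≠ 0 := mul_ne_zero (by omega) (by omega)
    refine ⟨(hmemTc _ (by nlinarith) q).mpr
      ⟨hqV, of_dvd_of_setOf_eq_dvd hd hqS (dvd_mul_right n n') hnn'⟩, ?_⟩
    rw [hS n (by omega)] at hqS
    have := ordAt_x_mul_le q (by subst hW; exact q.valuation_le_one a)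
      (by subst hW; exact q.valuation_le_one b) hxy (k := n') (by omega) (by omega) hqS.2
    omega
  rw [hc m hm, hc k hk, hc (m * k) (by nlinarith)]
  refine prod_pow_mul_prod_pow_dvd _ ?_ (hgrow m k hm hk) (mul_comm k m ▸ hgrow k m hk hm)
  refine Finset.disjoint_left.mpr fun q hqm hqk => ?_
  obtain ⟨hqV, hqSm⟩ := (hmemTc m hm q).mp hqm
  obtain ⟨d, hd, hpat⟩ := hpattern q hqV
  exact not_and_of_setOf_eq_dvd hpat hd hmk ⟨hqSm, ((hmemTc k hk q).mp hqk).2⟩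
end

section
/- Let k₁, k₃, k₄ be integers with |k₁| > 5, k₃ ≠ 0, k₄ = k₃ − k₁, (k₁ − 1) divides (k₄ − 1), and |k₃| = |k₁·(k₁ + 1)|. Then k₄ = k₁². -/
/-!
Up to sign, `k₃ = k₁ (k₁ + 1)`. The sign `+` gives `k₄ = k₁²` directly. The sign `-` gives
`k₄ - 1 = -(k₁ + 1)²`, and since `(k₁ + 1)² ≡ 4 [ZMOD k₁ - 1]` this makes `k₁ - 1` a divisor of
`4`, which forces `|k₁| ≤ 5`.
-/

lemma Int.sub_one_dvd_four_of_dvd_add_one_sq {k : ℤ} (h : k - 1 ∣ (k + 1) ^ 2) : k - 1 ∣ 4 := by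
  have hsq : (k + 1) ^ 2 = (k - 1) * (k + 3) + 4 := by ring
  rw [hsq] at h
  exact (dvd_add_right (dvd_mul_right _ _)).mp h

lemma Int.abs_le_five_of_sub_one_dvd_four {k : ℤ} (h : k - 1 ∣ 4) : |k| ≤ 5 := by
  have hle : |k - 1| ≤ 4 := Int.le_of_dvd (by norm_num) ((abs_dvd _ _).mpr h)
  obtain ⟨hlo, hhi⟩ := abs_le.mp hle
  exact abs_le.mpr ⟨by linarith, by linarith⟩

theorem stmt_19_general (k₁ k₃ k₄ : ℤ) (h1 : 5 < |k₁|)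
    (h4 : k₄ = k₃ - k₁) (hdvd : (k₁ - 1) ∣ (k₄ - 1))
    (habs : |k₃| = |k₁ * (k₁ + 1)|) : k₄ = k₁ ^ 2 := by
  subst h4
  rcases abs_eq_abs.mp habs with hk₃ | hk₃
  · rw [hk₃]; ring
  · have hsq : k₁ - 1 ∣ (k₁ + 1) ^ 2 := by
      have hneg : k₃ - k₁ - 1 = -(k₁ + 1) ^ 2 := by rw [hk₃]; ring
      rwa [hneg, dvd_neg] at hdvd
    have hsmall := Int.abs_le_five_of_sub_one_dvd_four (Int.sub_one_dvd_four_of_dvd_add_one_sq hsq)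
    omega

theorem stmt_19 (k₁ k₃ k₄ : ℤ) (h1 : 5 < |k₁|) (h3 : k₃ ≠ 0)
    (h4 : k₄ = k₃ - k₁) (hdvd : (k₁ - 1) ∣ (k₄ - 1))
    (habs : |k₃| = |k₁ * (k₁ + 1)|) : k₄ = k₁ ^ 2 :=
  stmt_19_general k₁ k₃ k₄ h1 h4 hdvd habs
end
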